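/- Let (r_n) be positive reals with ∑_n r_n^d = ∞, and let (ω_n) be i.i.d. uniform points in [0,1]^d. Then almost surely the set E = limsup_n B(ω_n, r_n) has full Lebesgue measure in [0,1]^d. -/

import Mathlib

/-!
Fix `x` in the cube. The events `ω n ∈ B(x, r n)` are independent, and each has probability at
least `c · min (r n) 1 ^ d` because the ball meets the cube in a subcube of side proportional to
`min (r n) 1`; these probabilities are not summable, so by the second Borel–Cantelli lemma `x` lies
in infinitely many balls almost surely. Fubini exchanges "for a.e. `x`, almost surely" into
"almost surely, for a.e. `x`".
-/

open MeasureTheory Metric Set Filter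

namespace EuclideanSpace

variable {ι : Type*} [Fintype ι]

theorem volume_setOf_forall_mem_Icc (a b : ι → ℝ) :
    volume {y : EuclideanSpace ℝ ι | ∀ i, y i ∈ Icc (a i) (b i)} =
      ∏ i, ENNReal.ofReal (b i - a i) := by
  have hbox : {y : EuclideanSpace ℝ ι | ∀ i, y i ∈ Icc (a i) (b i)} =
      (MeasurableEquiv.toLp 2 (ι → ℝ)).symm ⁻¹' Icc a b := by
    ext y
    simp [Pi.le_def, forall_and]
  rw [hbox, (volume_preserving_symm_measurableEquiv_toLp ι).measure_preimage
    measurableSet_Icc.nullMeasurableSet, Real.volume_Icc_pi]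

theorem dist_le_sqrt_card_mul {x y : EuclideanSpace ℝ ι} {s : ℝ} (hs : 0 ≤ s)
    (h : ∀ i, dist (x i) (y i) ≤ s) : dist x y ≤ √(Fintype.card ι) * s := by
  calc dist x y = √(∑ i, dist (x i) (y i) ^ 2) := dist_eq x y
    _ ≤ √(∑ _ : ι, s ^ 2) := by gcongr with i; exact h i
    _ = √(Fintype.card ι) * s := by
      rw [Finset.sum_const, Finset.card_univ, nsmul_eq_mul, Real.sqrt_mul (Nat.cast_nonneg _),
        Real.sqrt_sq hs]

/-- The cube of side `s = min ρ 1 / (√d + 1)` with corner `min x (1 - s)` lies in the unit cube,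
contains `x`, and has diameter `√d s < ρ`. -/
theorem ofReal_min_div_pow_le_volume_ball_inter_unitCube {x : EuclideanSpace ℝ ι}
    (hx : ∀ i, x i ∈ Icc (0 : ℝ) 1) {ρ : ℝ} (hρ : 0 < ρ) :
    ENNReal.ofReal ((min ρ 1 / (√(Fintype.card ι) + 1)) ^ Fintype.card ι) ≤
      volume (ball x ρ ∩ {y | ∀ i, y i ∈ Icc (0 : ℝ) 1}) := by
  set k := √(Fintype.card ι) + 1
  set s := min ρ 1 / k
  have hk : 1 ≤ k := le_add_of_nonneg_left (Real.sqrt_nonneg _)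
  have hs : 0 < s := div_pos (lt_min hρ one_pos) (by linarith)
  have hs1 : s ≤ 1 := div_le_one_of_le₀ ((min_le_right _ _).trans hk) (by linarith)
  have hsρ : √(Fintype.card ι) * s < ρ :=
    calc √(Fintype.card ι) * s < k * s := by gcongr; linarith
      _ = min ρ 1 := mul_div_cancel₀ _ (by positivity)
      _ ≤ ρ := min_le_left _ _
  set a : ι → ℝ := fun i => min (x i) (1 - s)
  have hxa : ∀ i, a i ≤ x i ∧ x i ≤ a i + s := fun i =>
    ⟨min_le_left _ _, by rw [← sub_le_iff_le_add, le_min_iff]; constructor <;> linarith [(hx i).2]⟩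
  calc ENNReal.ofReal (s ^ Fintype.card ι)
      = volume {y : EuclideanSpace ℝ ι | ∀ i, y i ∈ Icc (a i) (a i + s)} := by
        rw [volume_setOf_forall_mem_Icc]
        simp [ENNReal.ofReal_pow hs.le]
    _ ≤ _ := by
      refine measure_mono fun y hy => ⟨?_, fun i => ⟨?_, ?_⟩⟩
      · refine mem_ball.2 (lt_of_le_of_lt (dist_le_sqrt_card_mul hs.le fun i => ?_) hsρ)
        obtain ⟨hay, hya⟩ := hy i
        obtain ⟨hax, hxa⟩ := hxa i
        rw [Real.dist_eq, abs_le]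
        constructor <;> linarith
      · exact (le_min (hx i).1 (by linarith)).trans (hy i).1
      · exact (hy i).2.trans (by linarith [min_le_right (x i) (1 - s)])

end EuclideanSpace

theorem not_summable_min_one_pow {r : ℕ → ℝ} {d : ℕ} (h : ¬Summable fun n => r n ^ d) :
    ¬Summable fun n => min (r n) 1 ^ d := by
  intro hmin
  have hsmall : ∀ᶠ n in atTop, min (r n) 1 ^ d < 1 :=
    hmin.tendsto_atTop_zero.eventually_lt_const one_pos
  refine h (hmin.congr_atTop ?_)
  filter_upwards [hsmall] with n hn
  rw [min_eq_left]
  by_contra! h1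
  simp [min_eq_right h1.le] at hn

theorem tsum_ofReal_min_one_div_pow_eq_top {r : ℕ → ℝ} (hr : ∀ n, 0 ≤ r n) {d : ℕ}
    (h : ¬Summable fun n => r n ^ d) {k : ℝ} (hk : 0 < k) :
    ∑' n, ENNReal.ofReal ((min (r n) 1 / k) ^ d) = ⊤ := by
  by_contra hfin
  refine not_summable_min_one_pow h ?_
  have hsum : Summable fun n => (min (r n) 1 / k) ^ d :=
    (ENNReal.summable_toReal hfin).congr fun n =>
      ENNReal.toReal_ofReal (pow_nonneg (div_nonneg (le_min (hr n) zero_le_one) hk.le) _)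
  simpa only [div_pow, summable_div_const_iff (pow_ne_zero d hk.ne')] using hsum

theorem ProbabilityTheory.ae_frequently_mem_of_tsum_eq_top {α : Type*} [MeasurableSpace α]
    {μ : Measure α} {P : Measure (ℕ → α)} [IsProbabilityMeasure P]
    (hP : ∀ (s : Finset ℕ) (A : ℕ → Set α), (∀ n, MeasurableSet (A n)) →
      P {ω | ∀ n ∈ s, ω n ∈ A n} = ∏ n ∈ s, μ (A n))
    {A : ℕ → Set α} (hA : ∀ n, MeasurableSet (A n)) (hsum : ∑' n, μ (A n) = ⊤) :
    ∀ᵐ ω ∂P, ∃ᶠ n in atTop, ω n ∈ A n := by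
  set S : ℕ → Set (ℕ → α) := fun n => (fun ω => ω n) ⁻¹' A n
  have hS : ∀ n, MeasurableSet (S n) := fun n => measurable_pi_apply n (hA n)
  have hPS : ∀ s : Finset ℕ, P (⋂ n ∈ s, S n) = ∏ n ∈ s, μ (A n) := fun s => by
    rw [← hP s A hA]
    congr 1
    ext ω
    simp [S]
  have hPS_single : ∀ n, P (S n) = μ (A n) := fun n => by simpa using hPS {n}
  have hindep : iIndepSet S P := (iIndepSet_iff_meas_biInter hS).2 fun s => by
    simp only [hPS, hPS_single]
  have hlimsup : P (limsup S atTop) = 1 :=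
    measure_limsup_eq_one hS hindep (by simpa only [hPS_single] using hsum)
  have hS_limsup := MeasurableSet.measurableSet_limsup hS
  filter_upwards [(ae_mem_iff_measure_eq hS_limsup.nullMeasurableSet).2
    (hlimsup.trans measure_univ.symm)] with ω hω
  exact mem_limsup_iff_frequently_mem.1 hω

theorem measurableSet_setOf_frequently_dist_lt {X : Type*} [PseudoMetricSpace X]
    [SecondCountableTopology X] [MeasurableSpace X] [OpensMeasurableSpace X] (r : ℕ → ℝ) :
    MeasurableSet {p : X × (ℕ → X) | ∃ᶠ n in atTop, dist p.1 (p.2 n) < r n} := by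
  have h : {p : X × (ℕ → X) | ∃ᶠ n in atTop, dist p.1 (p.2 n) < r n} =
      limsup (fun n => {p : X × (ℕ → X) | dist p.1 (p.2 n) < r n}) atTop := by
    ext p
    simp [mem_limsup_iff_frequently_mem]
  rw [h]
  exact MeasurableSet.measurableSet_limsup fun n => measurableSet_lt (by fun_prop) measurable_const

theorem limsup_full_measure_of_divergence_general
    (d : ℕ)
    (r : ℕ → ℝ) (hr : ∀ n, 0 < r n)
    (hdiv : ¬ Summable fun n => r n ^ (d : ℝ))
    (cube : Set (EuclideanSpace ℝ (Fin d)))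
    (hcube : cube = {x | ∀ i, x i ∈ Set.Icc (0:ℝ) 1})
    (μ : Measure (EuclideanSpace ℝ (Fin d))) (hμ : μ = volume.restrict cube)
    (P : Measure (ℕ → EuclideanSpace ℝ (Fin d))) [IsProbabilityMeasure P]
    (hP : ∀ (s : Finset ℕ) (A : ℕ → Set (EuclideanSpace ℝ (Fin d))),
      (∀ n, MeasurableSet (A n)) →
      P {ω | ∀ n ∈ s, ω n ∈ A n} = ∏ n ∈ s, μ (A n))
    (E : (ℕ → EuclideanSpace ℝ (Fin d)) → Set (EuclideanSpace ℝ (Fin d)))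
    (hE : ∀ ω, E ω = ⋂ N, ⋃ n, ⋃ (_ : N ≤ n), ball (ω n) (r n)) :
    ∀ᵐ ω ∂P, volume (cube \ E ω) = 0 := by
  subst hμ
  simp only [Real.rpow_natCast] at hdiv
  have hcube_meas : MeasurableSet cube := by
    rw [hcube]
    measurability
  have hmem : ∀ ω x, x ∈ E ω ↔ ∃ᶠ n in atTop, dist x (ω n) < r n := fun ω x => by
    simp [hE, frequently_atTop]
  have hcover : ∀ x ∈ cube, ∀ᵐ ω ∂P, ∃ᶠ n in atTop, dist x (ω n) < r n := fun x hx => by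
    refine (ProbabilityTheory.ae_frequently_mem_of_tsum_eq_top hP (A := fun n => ball x (r n))
      (fun n => measurableSet_ball) ?_).mono fun ω hω => hω.mono fun n hn => mem_ball_comm.1 hn
    rw [eq_top_iff, ← tsum_ofReal_min_one_div_pow_eq_top (fun n => (hr n).le) hdiv
      (k := √d + 1) (by positivity)]
    refine ENNReal.tsum_le_tsum fun n => ?_
    rw [Measure.restrict_apply measurableSet_ball, hcube]
    have hvol := EuclideanSpace.ofReal_min_div_pow_le_volume_ball_inter_unitCube
      (by rwa [hcube] at hx) (hr n)
    rwa [Fintype.card_fin] at hvol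
  have hae := (Measure.ae_ae_comm (measurableSet_setOf_frequently_dist_lt r)).1
    (ae_restrict_of_forall_mem (μ := volume) hcube_meas hcover)
  filter_upwards [hae] with ω hω
  calc volume (cube \ E ω) = volume.restrict cube (E ω)ᶜ := by
        rw [Measure.restrict_apply' hcube_meas, sdiff_eq, inter_comm]
    _ = 0 := ae_iff.1 (hω.mono fun x hx => (hmem ω x).2 hx)

/-- If ∑ r_n^d = ∞, then almost surely the limsup of random balls with i.i.d.
uniform centres has full Lebesgue measure in [0,1]^d. -/
theorem limsup_full_measure_of_divergence
    (d : ℕ) (hd : 0 < d)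
    (r : ℕ → ℝ) (hr : ∀ n, 0 < r n)
    (hdiv : ¬ Summable fun n => r n ^ (d : ℝ))
    (cube : Set (EuclideanSpace ℝ (Fin d)))
    (hcube : cube = {x | ∀ i, x i ∈ Set.Icc (0:ℝ) 1})
    (μ : Measure (EuclideanSpace ℝ (Fin d))) (hμ : μ = volume.restrict cube)
    (P : Measure (ℕ → EuclideanSpace ℝ (Fin d))) [IsProbabilityMeasure P]
    (hP : ∀ (s : Finset ℕ) (A : ℕ → Set (EuclideanSpace ℝ (Fin d))),
      (∀ n, MeasurableSet (A n)) →
      P {ω | ∀ n ∈ s, ω n ∈ A n} = ∏ n ∈ s, μ (A n))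
    (E : (ℕ → EuclideanSpace ℝ (Fin d)) → Set (EuclideanSpace ℝ (Fin d)))
    (hE : ∀ ω, E ω = ⋂ N, ⋃ n, ⋃ (_ : N ≤ n), ball (ω n) (r n)) :
    ∀ᵐ ω ∂P, volume (cube \ E ω) = 0 :=
  limsup_full_measure_of_divergence_general d r hr hdiv cube hcube μ hμ P hP E hE
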